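/- For two binary trees T1 and T2 of size n, T1 ≤ T2 in the Tamari lattice if and only if Dec(T1) ⊆ Dec(T2), and also if and only if Inc(T2) ⊆ Inc(T1). -/
import Mathlib


/-- Planar binary trees. -/
inductive BT : Type
  | leaf : BT
  | node : BT → BT → BT
deriving DecidableEq

namespace BT

/-- Number of internal vertices. -/
def size : BT → ℕ
  | leaf => 0
  | node l r => l.size + r.size + 1

/-- One left rotation somewhere in the tree (covering relation of the Tamari lattice). -/
inductive Rot : BT → BT → Prop
  | root (a b c : BT) : Rot (node (node a b) c) (node a (node b c))
  | left {l l' : BT} (r : BT) : Rot l l' → Rot (node l r) (node l' r)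
  | right (l : BT) {r r' : BT} : Rot r r' → Rot (node l r) (node l r')

/-- The Tamari order: reflexive transitive closure of left rotations. -/
def tamariLE (S T : BT) : Prop := Relation.ReflTransGen Rot S T

/-- The partial order induced by a binary tree on `{1,…,size}` via in-order labelling:
`rel T i j` iff the vertex labelled `i` lies in the subtree rooted at the vertex labelled `j`. -/
def rel : BT → ℕ → ℕ → Prop
  | leaf, _, _ => False
  | node l r, i, j =>
      (j = l.size + 1 ∧ 1 ≤ i ∧ i ≤ l.size + r.size + 1) ∨
      rel l i j ∨
      (∃ i' j', rel r i' j' ∧ i = i' + l.size + 1 ∧ j = j' + l.size + 1)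

/-- Decreasing relations of a tree: pairs `(c, a)` with `a < c` and `c ◁ a`. -/
def Dec (T : BT) : Set (ℕ × ℕ) := {p | p.2 < p.1 ∧ T.rel p.1 p.2}

/-- Increasing relations of a tree: pairs `(a, c)` with `a < c` and `a ◁ c`. -/
def Inc (T : BT) : Set (ℕ × ℕ) := {p | p.1 < p.2 ∧ T.rel p.1 p.2}

/-- Left/right mirror image of a planar binary tree. -/
def mirror : BT → BT
  | leaf => leaf
  | node l r => node r.mirror l.mirror

/-- In-order label of the root (0 for the empty tree). -/
def rootLabel : BT → ℕ
  | leaf => 0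
  | node l _ => l.size + 1

/-- `rcRel T i j` iff, under in-order labelling, the vertex `j` is the right child of vertex `i`. -/
def rcRel : BT → ℕ → ℕ → Prop
  | leaf, _, _ => False
  | node l r, i, j =>
      (i = l.size + 1 ∧ r ≠ leaf ∧ j = l.size + 1 + r.rootLabel) ∨
      rcRel l i j ∨
      (∃ i' j', rcRel r i' j' ∧ i = i' + l.size + 1 ∧ j = j' + l.size + 1)

/-- `graft T i S` grafts the root of `S` on the `i`-th leaf of `T` (leaves numbered 1,…,size+1
from left to right). -/
def graft : BT → ℕ → BT → BT
  | leaf, _, S => S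
  | node l r, i, S =>
      if i ≤ l.size + 1 then node (l.graft i S) r
      else node l (r.graft (i - (l.size + 1)) S)

end BT

/-- An interval-poset of size `n`: a partial order on `{1,…,n}` (encoded as a relation on `ℕ`
supported and reflexive on `{1,…,n}`) satisfying the two interval-poset conditions. -/
def IsIntervalPoset (n : ℕ) (r : ℕ → ℕ → Prop) : Prop :=
  (∀ a b, r a b → 1 ≤ a ∧ a ≤ n ∧ 1 ≤ b ∧ b ≤ n) ∧
  (∀ a, 1 ≤ a → a ≤ n → r a a) ∧
  (∀ a b c, r a b → r b c → r a c) ∧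
  (∀ a b, r a b → r b a → a = b) ∧
  (∀ a b c, a < b → b < c → r a c → r b c) ∧
  (∀ a b c, a < b → b < c → r c a → r c b)

/-- The Châtel–Pons interval-poset of an interval `[S,T]`: reflexivity together with the
decreasing relations of `S` and the increasing relations of `T`. -/
def ipOf (S T : BT) : ℕ → ℕ → Prop := fun a b =>
  (a = b ∧ 1 ≤ a ∧ a ≤ S.size) ∨ (b < a ∧ S.rel a b) ∨ (a < b ∧ T.rel a b)

/-- `HasseCov r a b`: the relation `a ◁ b` is a cover relation (an edge `a → b` of the
Hasse diagram) of the poset `r`. -/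
def HasseCov (r : ℕ → ℕ → Prop) (a b : ℕ) : Prop :=
  r a b ∧ a ≠ b ∧ ∀ c, r a c → r c b → c = a ∨ c = b

/-- An exceptional interval-poset: the Hasse diagram contains no configuration
`y → x`, `y → z` with `x < y < z`. -/
def IsExceptional (n : ℕ) (r : ℕ → ℕ → Prop) : Prop :=
  IsIntervalPoset n r ∧
  ¬∃ x y z, x < y ∧ y < z ∧ HasseCov r y x ∧ HasseCov r y z

/-- A noncrossing tree in the based regular `(n+1)`-gon, with vertices `0,…,n`:
a spanning tree whose edges pairwise do not cross. Boundary edge `i` (for `1 ≤ i ≤ n`)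
joins vertices `i-1` and `i`; the base joins vertices `0` and `n`. -/
def IsNCTree (n : ℕ) (G : SimpleGraph (Fin (n + 1))) : Prop :=
  G.IsTree ∧
  ∀ a b c d : Fin (n + 1), G.Adj a b → G.Adj c d →
    ¬((a : ℕ) < c ∧ (c : ℕ) < b ∧ (b : ℕ) < d)

/-- Adjacency in a graph on `Fin (n+1)`, read on natural numbers. -/
def adjN (n : ℕ) (G : SimpleGraph (Fin (n + 1))) (a b : ℕ) : Prop :=
  ∃ (ha : a < n + 1) (hb : b < n + 1), G.Adj ⟨a, ha⟩ ⟨b, hb⟩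

/-- `EdgeLabel n G a b i`: the edge of the noncrossing tree `G` joining vertices `a < b`
carries the label `i`, i.e. it separates boundary edge `i` from the base and `i` is either
the edge itself (boundary case) or an open boundary edge. -/
def EdgeLabel (n : ℕ) (G : SimpleGraph (Fin (n + 1))) (a b i : ℕ) : Prop :=
  a < b ∧ b ≤ n ∧ adjN n G a b ∧ a < i ∧ i ≤ b ∧ (b = a + 1 ∨ ¬adjN n G (i - 1) i)

/-- The relation `◁_T` induced by a noncrossing tree: `i ◁ j` iff the edge labelled `i`
is separated from the base by the edge labelled `j` (plus reflexivity on `{1,…,n}`). -/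
def ncRel (n : ℕ) (G : SimpleGraph (Fin (n + 1))) : ℕ → ℕ → Prop := fun i j =>
  (i = j ∧ 1 ≤ i ∧ i ≤ n) ∨
  ∃ a b c d, EdgeLabel n G a b i ∧ EdgeLabel n G c d j ∧ c ≤ a ∧ b ≤ d ∧ ¬(a = c ∧ b = d)

/-- The graph `T_P` associated to an interval-poset `P`: for each `v`, an edge from the left
side of `min {x | x ◁ v}` (vertex `min − 1`) to the right side of `max {x | x ◁ v}`. -/
noncomputable def graphOf (n : ℕ) (r : ℕ → ℕ → Prop) : SimpleGraph (Fin (n + 1)) :=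
  SimpleGraph.fromRel (fun a b =>
    ∃ v, 1 ≤ v ∧ v ≤ n ∧ (a : ℕ) + 1 = sInf {x | r x v} ∧ (b : ℕ) = sSup {x | r x v})

/-- The partition `π_T` of a binary tree, as an equivalence-type relation: the finest
partition in which every vertex and its right child lie in the same block. -/
def sameBlock (T : BT) : ℕ → ℕ → Prop :=
  Relation.EqvGen (fun a b => T.rcRel a b ∨ T.rcRel b a)

/-- A relation (thought of as "same block of a partition") is noncrossing. -/
def IsNoncrossingRel (r : ℕ → ℕ → Prop) : Prop :=
  ¬∃ i j k l, i < j ∧ j < k ∧ k < l ∧ r i k ∧ r j l ∧ ¬r i j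

/-- The partition `π_T` of `{1,…,n}` associated to a binary tree, restricted to its support. -/
def partOf (T : BT) : ℕ → ℕ → Prop := fun a b =>
  sameBlock T a b ∧ 1 ≤ a ∧ a ≤ T.size ∧ 1 ≤ b ∧ b ≤ T.size

/-- A noncrossing partition of `{1,…,n}`, encoded as its "same block" equivalence relation. -/
def NCPartition (n : ℕ) (r : ℕ → ℕ → Prop) : Prop :=
  (∀ a b, r a b → 1 ≤ a ∧ a ≤ n ∧ 1 ≤ b ∧ b ≤ n) ∧
  (∀ a, 1 ≤ a → a ≤ n → r a a) ∧
  (∀ a b, r a b → r b a) ∧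
  (∀ a b c, r a b → r b c → r a c) ∧
  IsNoncrossingRel r

/-- `SubtreeAt S i j A`: `A` is a (nonempty) subtree of `S` rooted at an internal vertex,
whose leaves are the leaves `i,…,j` of `S`. -/
def SubtreeAt : BT → ℕ → ℕ → BT → Prop
  | .leaf, _, _, _ => False
  | .node l r, i, j, A =>
      (A = .node l r ∧ i = 1 ∧ j = (BT.node l r).size + 1) ∨
      SubtreeAt l i j A ∨
      (∃ i' j', SubtreeAt r i' j' A ∧ i = i' + l.size + 1 ∧ j = j' + l.size + 1)

/-- A new interval of `Tam n`: an interval that cannot be obtained as the grafting of two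
intervals of smaller sizes. -/
def IsNewInterval (n : ℕ) (S T : BT) : Prop :=
  S.size = n ∧ T.size = n ∧ BT.tamariLE S T ∧
  ¬∃ (S1 T1 S2 T2 : BT) (i : ℕ),
      S1.size = T1.size ∧ S2.size = T2.size ∧ S1.size < n ∧ S2.size < n ∧
      BT.tamariLE S1 T1 ∧ BT.tamariLE S2 T2 ∧ 1 ≤ i ∧ i ≤ S1.size + 1 ∧
      S = S1.graft i S2 ∧ T = T1.graft i T2

/-- The rise of a relation of size `n`: keep the decreasing relations, shift the increasing
relations by `+1`, on the ground set `{1,…,n+1}`. -/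
def riseRel (n : ℕ) (r : ℕ → ℕ → Prop) : ℕ → ℕ → Prop := fun a b =>
  (a = b ∧ 1 ≤ a ∧ a ≤ n + 1) ∨ (b < a ∧ r a b) ∨ (a < b ∧ 2 ≤ a ∧ r (a - 1) (b - 1))

/-- A relation is modern: no configuration `x ◁ y` and `z ◁ y` with `x < y < z`. -/
def ModernRel (r : ℕ → ℕ → Prop) : Prop :=
  ¬∃ x y z, x < y ∧ y < z ∧ r x y ∧ r z y

/-- A new interval-poset of size `m`: no increasing relation starting at `1`, no decreasing
relation starting at `m`, and no pair of relations `i+1 ◁ j+1` and `j ◁ i` with `i < j`. -/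
def NewIP (m : ℕ) (r : ℕ → ℕ → Prop) : Prop :=
  IsIntervalPoset m r ∧
  (¬∃ y, 1 < y ∧ r 1 y) ∧
  (¬∃ x, x < m ∧ r m x) ∧
  ¬∃ i j, i < j ∧ r (i + 1) (j + 1) ∧ r j i

/-- The fall of a relation of size `m`: keep the decreasing relations, shift the increasing
relations by `−1`, on the ground set `{1,…,m−1}`. -/
def fallRel (m : ℕ) (r : ℕ → ℕ → Prop) : ℕ → ℕ → Prop := fun a b =>
  (a = b ∧ 1 ≤ a ∧ a ≤ m - 1) ∨ (b < a ∧ r a b) ∨ (a < b ∧ r (a + 1) (b + 1))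

/-- Iterated rise: `riseIter n r k` is the `k`-th rise of a relation of size `n`. -/
def riseIter (n : ℕ) (r : ℕ → ℕ → Prop) : ℕ → (ℕ → ℕ → Prop)
  | 0 => r
  | k + 1 => riseRel (n + k) (riseIter n r k)

/-- An infinitely modern relation: no configuration `w ◁ x` and `z ◁ y` with `w < x < y < z`. -/
def InfModernRel (r : ℕ → ℕ → Prop) : Prop :=
  ¬∃ w x y z, w < x ∧ x < y ∧ y < z ∧ r w x ∧ r z y

open Classical in
/-- `irStat n r`: the smallest `k` with an increasing relation `k ◁ k+1`, and `n` if none. -/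
noncomputable def irStat (n : ℕ) (r : ℕ → ℕ → Prop) : ℕ :=
  if ∃ k, r k (k + 1) then sInf {k | r k (k + 1)} else n

open Classical in
/-- `drStat n r`: the largest `i` with a decreasing relation `i ◁ i−1`, and `1` if none. -/
noncomputable def drStat (n : ℕ) (r : ℕ → ℕ → Prop) : ℕ :=
  if ∃ i, 2 ≤ i ∧ r i (i - 1) then sSup {i | 2 ≤ i ∧ r i (i - 1)} else 1
namespace BT

/-- Right endpoint of the in-order interval of the subtree rooted at `a`. -/
def rv : BT → ℕ → ℕ
  | leaf, _ => 0
  | node l r, a =>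
      if a ≤ l.size then l.rv a
      else if a = l.size + 1 then l.size + r.size + 1
      else r.rv (a - l.size - 1) + l.size + 1

/-- Left endpoint of the in-order interval of the subtree rooted at `a`. -/
def lv : BT → ℕ → ℕ
  | leaf, _ => 0
  | node l r, a =>
      if a ≤ l.size then l.lv a
      else if a = l.size + 1 then 1
      else r.lv (a - l.size - 1) + l.size + 1


lemma rv_left {l r : BT} {a : ℕ} (h : a ≤ l.size) : rv (node l r) a = rv l a := by
  simp [rv, h]

lemma rv_root (l r : BT) : rv (node l r) (l.size + 1) = l.size + r.size + 1 := by
  have h : ¬ (l.size + 1 ≤ l.size) := by omega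
  simp [rv, h]

lemma rv_right {l r : BT} {a : ℕ} (h : l.size + 1 < a) :
    rv (node l r) a = rv r (a - l.size - 1) + l.size + 1 := by
  have h1 : ¬ (a ≤ l.size) := by omega
  have h2 : ¬ (a = l.size + 1) := by omega
  simp [rv, h1, h2]

lemma lv_left {l r : BT} {a : ℕ} (h : a ≤ l.size) : lv (node l r) a = lv l a := by
  simp [lv, h]

lemma lv_root (l r : BT) : lv (node l r) (l.size + 1) = 1 := by
  have h : ¬ (l.size + 1 ≤ l.size) := by omega
  simp [lv, h]

lemma lv_right {l r : BT} {a : ℕ} (h : l.size + 1 < a) :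
    lv (node l r) a = lv r (a - l.size - 1) + l.size + 1 := by
  have h1 : ¬ (a ≤ l.size) := by omega
  have h2 : ¬ (a = l.size + 1) := by omega
  simp [lv, h1, h2]

lemma rot_size {S T : BT} (h : Rot S T) : S.size = T.size := by
  induction h with
  | root a b c => simp [size]; omega
  | left r h ih => simp [size]; omega
  | right l h ih => simp [size]; omega

lemma rel_range {T : BT} {i j : ℕ} (h : rel T i j) :
    1 ≤ i ∧ i ≤ T.size ∧ 1 ≤ j ∧ j ≤ T.size := by
  induction T generalizing i j with
  | leaf => exact absurd h (by simp [rel])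
  | node l r ihl ihr =>
    rcases h with ⟨rfl, h1, h2⟩ | h | ⟨i', j', h, rfl, rfl⟩
    · simp [size]; omega
    · have := ihl h; simp [size]; omega
    · have := ihr h; simp [size]; omega

lemma rv_bounds {T : BT} {a : ℕ} (h1 : 1 ≤ a) (h2 : a ≤ T.size) :
    a ≤ rv T a ∧ rv T a ≤ T.size := by
  induction T generalizing a with
  | leaf => simp [size] at h2; omega
  | node l r ihl ihr =>
    simp only [size] at h2 ⊢
    by_cases hc : a ≤ l.size
    · have := ihl h1 hc
      simp only [rv, if_pos hc]; omega
    · by_cases hc2 : a = l.size + 1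
      · simp only [rv, if_neg hc, if_pos hc2]; omega
      · have h1' : 1 ≤ a - l.size - 1 := by omega
        have h2' : a - l.size - 1 ≤ r.size := by omega
        have := ihr h1' h2'
        simp only [rv, if_neg hc, if_neg hc2]; omega

lemma lv_bounds {T : BT} {a : ℕ} (h1 : 1 ≤ a) (h2 : a ≤ T.size) :
    1 ≤ lv T a ∧ lv T a ≤ a := by
  induction T generalizing a with
  | leaf => simp [size] at h2; omega
  | node l r ihl ihr =>
    simp only [size] at h2
    by_cases hc : a ≤ l.size
    · have := ihl h1 hc
      simp only [lv, if_pos hc]; omega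
    · by_cases hc2 : a = l.size + 1
      · simp only [lv, if_neg hc, if_pos hc2]; omega
      · have h1' : 1 ≤ a - l.size - 1 := by omega
        have h2' : a - l.size - 1 ≤ r.size := by omega
        have := ihr h1' h2'
        simp only [lv, if_neg hc, if_neg hc2]; omega

lemma rel_iff {T : BT} {i j : ℕ} :
    rel T i j ↔ (1 ≤ j ∧ j ≤ T.size ∧ lv T j ≤ i ∧ i ≤ rv T j) := by
  induction T generalizing i j with
  | leaf => simp [rel, size]; omega
  | node l r ihl ihr =>
    constructor
    · intro h
      rcases h with ⟨rfl, h1, h2⟩ | h | ⟨i', j', h, rfl, rfl⟩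
      · rw [lv_root, rv_root]
        simp only [size]; omega
      · have hr := rel_range h
        have := ihl.mp h
        rw [lv_left hr.2.2.2, rv_left hr.2.2.2]
        simp only [size]; omega
      · have hr := rel_range h
        have := ihr.mp h
        have hgt : l.size + 1 < j' + l.size + 1 := by omega
        rw [lv_right hgt, rv_right hgt]
        have he : j' + l.size + 1 - l.size - 1 = j' := by omega
        rw [he]
        simp only [size]; omega
    · rintro ⟨hj1, hj2, hli, hir⟩
      simp only [size] at hj2
      by_cases hc : j ≤ l.size
      · rw [lv_left hc] at hli; rw [rv_left hc] at hir
        exact Or.inr (Or.inl (ihl.mpr ⟨hj1, hc, hli, hir⟩))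
      · by_cases hc2 : j = l.size + 1
        · subst hc2
          rw [lv_root] at hli; rw [rv_root] at hir
          exact Or.inl ⟨rfl, by omega, by omega⟩
        · have hgt : l.size + 1 < j := by omega
          rw [lv_right hgt] at hli; rw [rv_right hgt] at hir
          have hlv := lv_bounds (T := r) (a := j - l.size - 1) (by omega) (by omega)
          refine Or.inr (Or.inr ⟨i - l.size - 1, j - l.size - 1,
            ihr.mpr ⟨by omega, by omega, by omega, by omega⟩, by omega, by omega⟩)
lemma rel_antisymm {T : BT} {i j : ℕ} (h1 : rel T i j) (h2 : rel T j i) : i = j := by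
  induction T generalizing i j with
  | leaf => exact absurd h1 (by simp [rel])
  | node l r ihl ihr =>
    rcases h1 with ⟨rfl, ha1, ha2⟩ | ha | ⟨i', j', ha, rfl, rfl⟩
    · rcases h2 with ⟨rfl, _, _⟩ | hb | ⟨i'', j'', hb, he1, he2⟩
      · rfl
      · have := rel_range hb; omega
      · have := rel_range hb; omega
    · rcases h2 with ⟨rfl, _, _⟩ | hb | ⟨i'', j'', hb, he1, he2⟩
      · have := rel_range ha; omega
      · exact ihl ha hb
      · have := rel_range ha; have := rel_range hb; omega
    · rcases h2 with ⟨he, _, _⟩ | hb | ⟨i'', j'', hb, he1, he2⟩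
      · have := rel_range ha; omega
      · have := rel_range ha; have := rel_range hb; omega
      · have := rel_range ha; have := rel_range hb
        have : i'' = j' := by omega
        have : j'' = i' := by omega
        subst this; subst ‹i'' = j'›
        have := ihr ha hb; omega

lemma nesting {T : BT} {i j : ℕ} (h : rel T i j) :
    lv T j ≤ lv T i ∧ rv T i ≤ rv T j := by
  induction T generalizing i j with
  | leaf => exact absurd h (by simp [rel])
  | node l r ihl ihr =>
    have hr := rel_range h
    rcases h with ⟨rfl, h1, h2⟩ | h | ⟨i', j', h, rfl, rfl⟩
    · rw [lv_root, rv_root]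
      have hi2 : i ≤ (node l r).size := hr.2.1
      have := lv_bounds (T := node l r) (a := i) (by omega) hi2
      have := rv_bounds (T := node l r) (a := i) (by omega) hi2
      simp only [size] at *
      omega
    · have hrr := rel_range h
      have := ihl h
      rw [lv_left hrr.2.1, lv_left hrr.2.2.2, rv_left hrr.2.1, rv_left hrr.2.2.2]
      exact this
    · have hrr := rel_range h
      have := ihr h
      have hgi : l.size + 1 < i' + l.size + 1 := by omega
      have hgj : l.size + 1 < j' + l.size + 1 := by omega
      rw [lv_right hgi, lv_right hgj, rv_right hgi, rv_right hgj]
      have he1 : i' + l.size + 1 - l.size - 1 = i' := by omega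
      have he2 : j' + l.size + 1 - l.size - 1 = j' := by omega
      rw [he1, he2]
      omega
lemma succ_ancestor {T : BT} {y : ℕ} (h1 : 1 ≤ y) (h2 : y ≤ T.size)
    (h3 : rv T y < T.size) : rel T y (rv T y + 1) := by
  induction T generalizing y with
  | leaf => simp [size] at h2; omega
  | node l r ihl ihr =>
    simp only [size] at h2 h3
    by_cases hc : y ≤ l.size
    · rw [rv_left hc] at h3 ⊢
      by_cases hc2 : l.rv y < l.size
      · exact Or.inr (Or.inl (ihl h1 hc hc2))
      · have := rv_bounds (T := l) h1 hc
        have he : l.rv y = l.size := by omega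
        rw [he]
        exact Or.inl ⟨rfl, by omega, by omega⟩
    · by_cases hc2 : y = l.size + 1
      · subst hc2
        rw [rv_root] at h3
        omega
      · have hgt : l.size + 1 < y := by omega
        rw [rv_right hgt] at h3 ⊢
        have h1' : 1 ≤ y - l.size - 1 := by omega
        have h2' : y - l.size - 1 ≤ r.size := by omega
        have h3' : r.rv (y - l.size - 1) < r.size := by omega
        have := ihr h1' h2' h3'
        exact Or.inr (Or.inr ⟨y - l.size - 1, r.rv (y - l.size - 1) + 1, this, by omega, by omega⟩)
lemma rotate_at (T : BT) (x : ℕ) (hx1 : 1 ≤ x) (hx2 : x ≤ T.size) (hlt : lv T x < x) :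
    ∃ T' z, Rot T T' ∧ 1 ≤ z ∧ z ≤ T.size ∧ lv T z = lv T x ∧ rv T z = x - 1 ∧
      rv T' z = rv T x ∧ ∀ a, a ≠ z → rv T' a = rv T a := by
  induction T generalizing x with
  | leaf => simp [size] at hx2; omega
  | node l r ihl ihr =>
    simp only [size] at hx2
    by_cases hc : x ≤ l.size
    · rw [lv_left hc] at hlt
      obtain ⟨l', z, hrot, hz1, hz2, hlz, hrz, hrz', hother⟩ := ihl x hx1 hc hlt
      have hsz : l'.size = l.size := (rot_size hrot).symm
      refine ⟨node l' r, z, Rot.left r hrot, hz1, by simp only [size]; omega, ?_, ?_, ?_, ?_⟩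
      · rw [lv_left hz2, lv_left hc, hlz]
      · rw [rv_left hz2, hrz]
      · rw [rv_left (show z ≤ l'.size by omega), rv_left hc, hrz']
      · intro a ha
        rcases Nat.lt_trichotomy a (l.size + 1) with h | h | h
        · rw [rv_left (show a ≤ l'.size by omega), rv_left (show a ≤ l.size by omega),
            hother a ha]
        · subst h
          have e1 : (node l' r).rv (l.size + 1) = l'.size + r.size + 1 := by
            rw [show l.size + 1 = l'.size + 1 by omega, rv_root]
          rw [e1, rv_root]; omega
        · rw [rv_right (show l'.size + 1 < a by omega), rv_right h, hsz]
    · by_cases hc2 : x = l.size + 1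
      · subst hc2
        match l with
        | leaf => rw [lv_root] at hlt; simp [size] at hlt
        | node A B =>
          refine ⟨node A (node B r), A.size + 1, Rot.root A B r, by omega,
            by simp only [size]; omega, ?_, ?_, ?_, ?_⟩
          · rw [lv_root, lv_left (show A.size + 1 ≤ (node A B).size by simp [size]),
              lv_root]
          · rw [rv_left (show A.size + 1 ≤ (node A B).size by simp [size]), rv_root]
            simp only [size]; omega
          · rw [rv_root, rv_root]; simp only [size]; omega
          · intro a ha
            rcases Nat.lt_trichotomy a (A.size + 1) with h | h | h
            · rw [rv_left (show a ≤ A.size by omega),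
                rv_left (show a ≤ (node A B).size by simp only [size]; omega),
                rv_left (show a ≤ A.size by omega)]
            · omega
            · rw [rv_right h]
              rcases Nat.lt_trichotomy (a - A.size - 1) (B.size + 1) with h2 | h2 | h2
              · rw [rv_left (show a - A.size - 1 ≤ B.size by omega),
                  rv_left (show a ≤ (node A B).size by simp only [size]; omega),
                  rv_right (show A.size + 1 < a by omega)]
              · have ha' : a = (A.node B).size + 1 := by simp only [size]; omega
                rw [h2, rv_root, ha', rv_root]; simp only [size]; omega
              · rw [rv_right h2, rv_right (show (node A B).size + 1 < a by
                  simp only [size]; omega)]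
                simp only [size]
                have : a - A.size - 1 - B.size - 1 = a - (A.size + B.size + 1) - 1 := by
                  omega
                rw [this]
                omega
      · have hgt : l.size + 1 < x := by omega
        rw [lv_right hgt] at hlt
        have hx1' : 1 ≤ x - l.size - 1 := by omega
        have hx2' : x - l.size - 1 ≤ r.size := by omega
        obtain ⟨r', z', hrot, hz1, hz2, hlz, hrz, hrz', hother⟩ :=
          ihr (x - l.size - 1) hx1' hx2' (by omega)
        have hsz : r'.size = r.size := (rot_size hrot).symm
        refine ⟨node l r', z' + l.size + 1, Rot.right l hrot, by omega,
          by simp only [size]; omega, ?_, ?_, ?_, ?_⟩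
        · rw [lv_right (show l.size + 1 < z' + l.size + 1 by omega), lv_right hgt]
          have he : z' + l.size + 1 - l.size - 1 = z' := by omega
          rw [he, hlz]
        · rw [rv_right (show l.size + 1 < z' + l.size + 1 by omega)]
          have he : z' + l.size + 1 - l.size - 1 = z' := by omega
          rw [he, hrz]; omega
        · rw [rv_right (show l.size + 1 < z' + l.size + 1 by omega), rv_right hgt]
          have he : z' + l.size + 1 - l.size - 1 = z' := by omega
          rw [he, hrz']
        · intro a ha
          rcases Nat.lt_trichotomy a (l.size + 1) with h | h | h
          · rw [rv_left (show a ≤ l.size by omega), rv_left (show a ≤ l.size by omega)]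
          · subst h; rw [rv_root, rv_root]; omega
          · rw [rv_right h, rv_right h, hother (a - l.size - 1) (by omega)]

lemma size_eq_zero {T : BT} (h : T.size = 0) : T = leaf := by
  cases T with
  | leaf => rfl
  | node l r => simp [size] at h

lemma rv_inj : ∀ (T U : BT), T.size = U.size →
    (∀ a, 1 ≤ a → a ≤ T.size → rv T a = rv U a) → T = U := by
  intro T
  induction T with
  | leaf =>
    intro U hs _
    exact (size_eq_zero (by simp [size] at hs; omega)).symm
  | node l r ihl ihr =>
    intro U hs hrv
    match U with
    | leaf => simp [size] at hs
    | node l2 r2 =>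
      simp only [size] at hs
      have hm : l.size = l2.size := by
        by_contra hne
        rcases Nat.lt_or_ge l.size l2.size with h | h
        · have h1 := hrv (l.size + 1) (by omega) (by simp only [size]; omega)
          rw [rv_root, rv_left (show l.size + 1 ≤ l2.size by omega)] at h1
          have := rv_bounds (T := l2) (a := l.size + 1) (by omega) (by omega)
          omega
        · have hlt : l2.size < l.size := by omega
          have h1 := hrv (l2.size + 1) (by omega) (by simp only [size]; omega)
          rw [rv_root, rv_left (show l2.size + 1 ≤ l.size by omega)] at h1
          have := rv_bounds (T := l) (a := l2.size + 1) (by omega) (by omega)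
          omega
      have hl : l = l2 := by
        apply ihl l2 hm
        intro a ha1 ha2
        have := hrv a ha1 (by simp only [size]; omega)
        rwa [rv_left ha2, rv_left (show a ≤ l2.size by omega)] at this
      have hr : r = r2 := by
        apply ihr r2 (by omega)
        intro a ha1 ha2
        have := hrv (a + l.size + 1) (by omega) (by simp only [size]; omega)
        rw [rv_right (show l.size + 1 < a + l.size + 1 by omega),
          rv_right (show l2.size + 1 < a + l.size + 1 by omega)] at this
        have he : a + l.size + 1 - l.size - 1 = a := by omega
        have he2 : a + l.size + 1 - l2.size - 1 = a := by omega
        rw [he] at this; rw [he2] at this; omega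
      rw [hl, hr]

lemma rot_rel {S T : BT} (h : Rot S T) : ∀ {a c : ℕ}, a < c → rel S c a → rel T c a := by
  induction h with
  | root A B C =>
    intro a c hac hrel
    rcases hrel with ⟨rfl, h1, h2⟩ | h | ⟨i', j', h, rfl, rfl⟩
    · simp only [size] at h2 hac ⊢
      refine Or.inr (Or.inr ⟨c - A.size - 1, B.size + 1,
        Or.inl ⟨rfl, by omega, by simp (config := { failIfUnchanged := false }) only [size] at *; omega⟩, by omega, by omega⟩)
    · rcases h with ⟨rfl, hh1, hh2⟩ | h | ⟨i', j', h, rfl, rfl⟩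
      · exact Or.inl ⟨rfl, by omega, by simp (config := { failIfUnchanged := false }) only [size] at *; omega⟩
      · exact Or.inr (Or.inl h)
      · exact Or.inr (Or.inr ⟨i', j', Or.inr (Or.inl h), rfl, rfl⟩)
    · simp only [size]
      refine Or.inr (Or.inr ⟨i' + B.size + 1, j' + B.size + 1,
        Or.inr (Or.inr ⟨i', j', h, rfl, rfl⟩), by simp (config := { failIfUnchanged := false }) only [size] at *; omega,
        by simp (config := { failIfUnchanged := false }) only [size] at *; omega⟩)
  | left r hr ih =>
    intro a c hac hrel
    rename_i l l'
    have hsz : l'.size = l.size := (rot_size hr).symm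
    rcases hrel with ⟨rfl, h1, h2⟩ | h | ⟨i', j', h, rfl, rfl⟩
    · exact Or.inl ⟨by omega, by omega, by omega⟩
    · exact Or.inr (Or.inl (ih hac h))
    · exact Or.inr (Or.inr ⟨i', j', h, by omega, by omega⟩)
  | right l hr ih =>
    intro a c hac hrel
    rename_i r r'
    have hsz : r'.size = r.size := (rot_size hr).symm
    rcases hrel with ⟨rfl, h1, h2⟩ | h | ⟨i', j', h, rfl, rfl⟩
    · exact Or.inl ⟨rfl, by omega, by omega⟩
    · exact Or.inr (Or.inl h)
    · exact Or.inr (Or.inr ⟨i', j', ih (by omega) h, rfl, rfl⟩)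

lemma dec_mono {S T : BT} (h : tamariLE S T) : Dec S ⊆ Dec T := by
  induction h with
  | refl => exact subset_rfl
  | tail hab hrot ih =>
    refine subset_trans ih ?_
    intro p hp
    exact ⟨hp.1, rot_rel hrot hp.1 hp.2⟩

lemma dec_subset_to_rv {T1 T2 : BT} (hs : T1.size = T2.size) (h : Dec T1 ⊆ Dec T2) :
    ∀ a, 1 ≤ a → a ≤ T1.size → rv T1 a ≤ rv T2 a := by
  intro a h1 h2
  have hb := rv_bounds (T := T1) h1 h2
  have hb2 := rv_bounds (T := T2) h1 (hs ▸ h2)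
  by_cases he : rv T1 a = a
  · omega
  · have hlt : a < rv T1 a := by omega
    have hrel : rel T1 (rv T1 a) a :=
      rel_iff.mpr ⟨h1, h2, le_trans (lv_bounds h1 h2).2 (by omega), le_rfl⟩
    have hmem : ((rv T1 a, a) : ℕ × ℕ) ∈ Dec T1 := ⟨hlt, hrel⟩
    have := (h hmem).2
    exact (rel_iff.mp this).2.2.2

lemma rv_to_dec_subset {T1 T2 : BT} (hs : T1.size = T2.size)
    (h : ∀ a, 1 ≤ a → a ≤ T1.size → rv T1 a ≤ rv T2 a) : Dec T1 ⊆ Dec T2 := by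
  rintro ⟨c, a⟩ ⟨hlt, hrel⟩
  obtain ⟨ha1, ha2, _, hc2⟩ := rel_iff.mp hrel
  refine ⟨hlt, rel_iff.mpr ⟨ha1, hs ▸ ha2, ?_, le_trans hc2 (h a ha1 ha2)⟩⟩
  exact le_trans (lv_bounds ha1 (hs ▸ ha2)).2 (le_of_lt hlt)

lemma rv_le_tamari : ∀ (N : ℕ) (T1 T2 : BT), T1.size = T2.size →
    (∀ a, 1 ≤ a → a ≤ T1.size → rv T1 a ≤ rv T2 a) →
    (∑ a ∈ Finset.Icc 1 T1.size, (rv T2 a - rv T1 a)) ≤ N →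
    tamariLE T1 T2 := by
  intro N
  induction N with
  | zero =>
    intro T1 T2 hs hle hsum
    have hall : ∀ a, 1 ≤ a → a ≤ T1.size → rv T1 a = rv T2 a := by
      intro a h1 h2
      have h0 : rv T2 a - rv T1 a = 0 :=
        (Finset.sum_eq_zero_iff.mp (Nat.le_zero.mp hsum)) a (Finset.mem_Icc.mpr ⟨h1, h2⟩)
      have := hle a h1 h2
      omega
    exact rv_inj T1 T2 hs hall ▸ Relation.ReflTransGen.refl
  | succ N ih =>
    intro T1 T2 hs hle hsum
    by_cases hall : ∀ a, 1 ≤ a → a ≤ T1.size → rv T1 a = rv T2 a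
    · exact rv_inj T1 T2 hs hall ▸ Relation.ReflTransGen.refl
    · push_neg at hall
      obtain ⟨y0, hy1, hy2, hne⟩ := hall
      have hy : rv T1 y0 < rv T2 y0 := lt_of_le_of_ne (hle y0 hy1 hy2) hne
      have hR1 : y0 ≤ rv T1 y0 := (rv_bounds hy1 hy2).1
      have hR2 : rv T2 y0 ≤ T2.size := (rv_bounds (T := T2) hy1 (hs ▸ hy2)).2
      have hxn : rv T1 y0 + 1 ≤ T1.size := by omega
      have hanc : rel T1 y0 (rv T1 y0 + 1) := succ_ancestor hy1 hy2 (by omega)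
      have hlx : lv T1 (rv T1 y0 + 1) ≤ y0 := (rel_iff.mp hanc).2.2.1
      obtain ⟨T', z, hrot, hz1, hz2, hlz, hrz, hrz', hother⟩ :=
        rotate_at T1 (rv T1 y0 + 1) (by omega) hxn (by omega)
      have hrzR : rv T1 z = rv T1 y0 := by omega
      have hrely0z : rel T1 y0 z :=
        rel_iff.mpr ⟨hz1, hz2, by rw [hlz]; exact hlx, by omega⟩
      have hzley0 : z ≤ y0 := by
        by_contra hgt
        push_neg at hgt
        have hzb := rv_bounds (T := T1) hz1 hz2
        have hrelzy0 : rel T1 z y0 :=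
          rel_iff.mpr ⟨hy1, hy2, le_trans (lv_bounds hy1 hy2).2 (by omega), by omega⟩
        exact absurd (rel_antisymm hrelzy0 hrely0z) (by omega)
      have hrv2z : rv T1 y0 + 1 ≤ rv T2 z := by
        rcases eq_or_lt_of_le hzley0 with rfl | hlt
        · omega
        · by_contra hcon
          push_neg at hcon
          have hle2 : rv T1 z ≤ rv T2 z := hle z hz1 hz2
          have hzb2 := lv_bounds (T := T2) hz1 (hs ▸ hz2)
          have hrelT2 : rel T2 y0 z :=
            rel_iff.mpr ⟨hz1, hs ▸ hz2, by omega, by omega⟩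
          have := (nesting hrelT2).2
          omega
      have hzb2 := lv_bounds (T := T2) hz1 (hs ▸ hz2)
      have hrelxz : rel T2 (rv T1 y0 + 1) z :=
        rel_iff.mpr ⟨hz1, hs ▸ hz2, by omega, hrv2z⟩
      have hnest := (nesting hrelxz).2
      have hsz' : T1.size = T'.size := rot_size hrot
      have hrvx := rv_bounds (T := T1) (a := rv T1 y0 + 1) (by omega) hxn
      have hle' : ∀ a, 1 ≤ a → a ≤ T'.size → rv T' a ≤ rv T2 a := by
        intro a h1 h2
        by_cases ha : a = z
        · subst ha
          rw [hrz']
          exact le_trans (hle _ (by omega) hxn) hnest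
        · rw [hother a ha]
          exact hle a h1 (by omega)
      have hsum' : (∑ a ∈ Finset.Icc 1 T'.size, (rv T2 a - rv T' a)) ≤ N := by
        rw [← hsz']
        have hlt2 : (∑ a ∈ Finset.Icc 1 T1.size, (rv T2 a - rv T' a)) <
            ∑ a ∈ Finset.Icc 1 T1.size, (rv T2 a - rv T1 a) := by
          apply Finset.sum_lt_sum
          · intro i hi
            by_cases hiz : i = z
            · have h1 := hle' z hz1 (by omega)
              rw [hiz, hrz']
              rw [hrz'] at h1
              omega
            · rw [hother i hiz]
          · refine ⟨z, Finset.mem_Icc.mpr ⟨hz1, hz2⟩, ?_⟩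
            have h1 := hle' z hz1 (by omega)
            rw [hrz'] at h1 ⊢
            omega
        omega
      exact Relation.ReflTransGen.head hrot
        (ih T' T2 (by omega) hle' hsum')

lemma mirror_size (T : BT) : T.mirror.size = T.size := by
  induction T with
  | leaf => rfl
  | node l r ihl ihr => simp only [mirror, size]; omega

lemma mirror_mirror (T : BT) : T.mirror.mirror = T := by
  induction T with
  | leaf => rfl
  | node l r ihl ihr => simp only [mirror, ihl, ihr]

lemma mirror_rot {S T : BT} (h : Rot S T) : Rot T.mirror S.mirror := by
  induction h with
  | root a b c => exact Rot.root _ _ _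
  | left r h ih => exact Rot.right _ ih
  | right l h ih => exact Rot.left _ ih

lemma mirror_tamari {S T : BT} (h : tamariLE S T) : tamariLE T.mirror S.mirror := by
  induction h with
  | refl => exact Relation.ReflTransGen.refl
  | tail hab hrot ih => exact Relation.ReflTransGen.head (mirror_rot hrot) ih

lemma mirror_rel {T : BT} {i j : ℕ} (h : rel T i j) :
    rel T.mirror (T.size + 1 - i) (T.size + 1 - j) := by
  induction T generalizing i j with
  | leaf => exact absurd h (by simp [rel])
  | node l r ihl ihr =>
    have hr := rel_range h
    simp only [size] at hr ⊢
    rcases h with ⟨rfl, h1, h2⟩ | h | ⟨i', j', h, rfl, rfl⟩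
    · exact Or.inl ⟨by simp only [mirror_size]; omega, by omega,
        by simp only [mirror_size]; omega⟩
    · have hrl := rel_range h
      refine Or.inr (Or.inr ⟨l.size + 1 - i, l.size + 1 - j, ihl h,
        by simp only [mirror_size]; omega, by simp only [mirror_size]; omega⟩)
    · have hrr := rel_range h
      refine Or.inr (Or.inl ?_)
      have e1 : l.size + r.size + 1 + 1 - (i' + l.size + 1) = r.size + 1 - i' := by omega
      have e2 : l.size + r.size + 1 + 1 - (j' + l.size + 1) = r.size + 1 - j' := by omega
      rw [e1, e2]
      exact ihr h

lemma inc_subset_iff_dec_mirror (T U : BT) (h : T.size = U.size) :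
    Inc T ⊆ Inc U ↔ Dec T.mirror ⊆ Dec U.mirror := by
  constructor
  · intro hsub p hp
    obtain ⟨hlt, hrel⟩ := hp
    have hr := rel_range hrel
    rw [mirror_size] at hr
    have h2 := mirror_rel hrel
    rw [mirror_mirror, mirror_size] at h2
    have hmem : ((T.size + 1 - p.1, T.size + 1 - p.2) : ℕ × ℕ) ∈ Inc T := ⟨by omega, h2⟩
    obtain ⟨_, hrelU⟩ := hsub hmem
    have h3 := mirror_rel hrelU
    have e1 : U.size + 1 - (T.size + 1 - p.1) = p.1 := by omega
    have e2 : U.size + 1 - (T.size + 1 - p.2) = p.2 := by omega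
    rw [e1, e2] at h3
    exact ⟨hlt, h3⟩
  · intro hsub p hp
    obtain ⟨hlt, hrel⟩ := hp
    have hr := rel_range hrel
    have h2 := mirror_rel hrel
    have hmem : ((T.size + 1 - p.1, T.size + 1 - p.2) : ℕ × ℕ) ∈ Dec T.mirror :=
      ⟨by omega, h2⟩
    have h3 := mirror_rel (hsub hmem).2
    rw [mirror_mirror, mirror_size] at h3
    have e1 : U.size + 1 - (T.size + 1 - p.1) = p.1 := by omega
    have e2 : U.size + 1 - (T.size + 1 - p.2) = p.2 := by omega
    rw [e1, e2] at h3
    exact ⟨hlt, h3⟩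

lemma tamari_iff_dec (S T : BT) (hs : S.size = T.size) :
    tamariLE S T ↔ Dec S ⊆ Dec T := by
  constructor
  · exact dec_mono
  · intro hd
    exact rv_le_tamari _ S T hs (dec_subset_to_rv hs hd) le_rfl

end BT

/-- `T1 ≤ T2` in the Tamari lattice iff `Dec T1 ⊆ Dec T2` iff `Inc T2 ⊆ Inc T1`. -/
theorem tamari_iff_dec_subset_iff_inc_subset (n : ℕ) (T1 T2 : BT)
    (h1 : T1.size = n) (h2 : T2.size = n) :
    (BT.tamariLE T1 T2 ↔ BT.Dec T1 ⊆ BT.Dec T2) ∧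
    (BT.tamariLE T1 T2 ↔ BT.Inc T2 ⊆ BT.Inc T1) := by
  have hs : T1.size = T2.size := by omega
  refine ⟨BT.tamari_iff_dec T1 T2 hs, ?_⟩
  have hm : BT.tamariLE T1 T2 ↔ BT.tamariLE T2.mirror T1.mirror := by
    constructor
    · exact BT.mirror_tamari
    · intro h
      have := BT.mirror_tamari h
      rwa [BT.mirror_mirror, BT.mirror_mirror] at this
  rw [hm, BT.tamari_iff_dec T2.mirror T1.mirror
    (by rw [BT.mirror_size, BT.mirror_size]; omega)]
  exact (BT.inc_subset_iff_dec_mirror T2 T1 (by omega)).symm
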